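/- arXiv:2311.06960 — 5 statements merged into one kernel-verified Lean document; each statement's English description precedes it below -/
import Mathlib

section
/- For any coordinate i, the integral of x_i^2 over the ℓ1-ball {x ∈ ℝ^n : ‖x‖_1 ≤ ρ} equals (2ρ)^{n+1} · ρ / (n+2)!. -/
/-!
Slicing the ball along the coordinate `x i = t` leaves an `ℓ¹`-ball of radius `ρ - |t|` in one
dimension less, of volume `(2 (ρ - |t|)) ^ (n - 1) / (n - 1)!`. The integral therefore reduces to
`2 ^ n / (n - 1)! * ∫₀^ρ t² (ρ - t) ^ (n - 1) dt`, and this Beta integral equals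
`2 (n - 1)! ρ ^ (n + 2) / (n + 2)!`.
-/

open MeasureTheory Set

def l1Ball (ι : Type*) [Fintype ι] (r : ℝ) : Set (ι → ℝ) := {x | ∑ k, |x k| ≤ r}

section l1Ball

variable {ι : Type*} [Fintype ι]

theorem mem_l1Ball {r : ℝ} {x : ι → ℝ} : x ∈ l1Ball ι r ↔ ∑ k, |x k| ≤ r := Iff.rfl

theorem isClosed_l1Ball (r : ℝ) : IsClosed (l1Ball ι r) :=
  isClosed_le (continuous_finsetSum _ fun k _ => (continuous_apply k).abs) continuous_const

theorem isCompact_l1Ball (r : ℝ) : IsCompact (l1Ball ι r) := by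
  refine Metric.isCompact_of_isClosed_isBounded (isClosed_l1Ball r) ?_
  refine (Metric.isBounded_iff_subset_closedBall 0).2 ⟨r, fun x hx => ?_⟩
  have hr : 0 ≤ r := (Finset.sum_nonneg fun k _ => abs_nonneg (x k)).trans hx
  rw [mem_closedBall_zero_iff, pi_norm_le_iff_of_nonneg hr]
  exact fun k => (Finset.single_le_sum (fun k _ => abs_nonneg (x k)) (Finset.mem_univ k)).trans hx

theorem l1Ball_eq_empty {r : ℝ} (hr : r < 0) : l1Ball ι r = ∅ :=
  eq_empty_of_forall_notMem fun x hx =>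
    (hr.trans_le (Finset.sum_nonneg fun k _ => abs_nonneg (x k))).not_ge hx

theorem volume_l1Ball {r : ℝ} (hr : 0 ≤ r) :
    volume (l1Ball ι r) =
      ENNReal.ofReal ((2 * r) ^ Fintype.card ι / (Fintype.card ι).factorial) := by
  cases isEmpty_or_nonempty ι with
  | inl hι =>
    have : l1Ball ι r = univ := eq_univ_of_forall fun x => by simp [mem_l1Ball, hr]
    simp [this, volume_pi]
  | inr hι =>
    have h := volume_sum_rpow_le (ι := ι) le_rfl r
    simp only [Real.rpow_one, div_one, one_add_one_eq_two, Real.Gamma_two,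
      Real.Gamma_nat_eq_factorial] at h
    rw [l1Ball, h, ← ENNReal.ofReal_pow hr, ← ENNReal.ofReal_mul (by positivity), mul_pow]
    ring_nf

theorem measureReal_l1Ball (r : ℝ) :
    volume.real (l1Ball ι r) =
      if 0 ≤ r then (2 * r) ^ Fintype.card ι / (Fintype.card ι).factorial else 0 := by
  split_ifs with hr
  · rw [measureReal_def, volume_l1Ball hr, ENNReal.toReal_ofReal (by positivity)]
  · simp [l1Ball_eq_empty (not_le.1 hr)]

end l1Ball

theorem preimage_piFinSuccAbove_l1Ball {m : ℕ} (i : Fin (m + 1)) (r : ℝ) :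
    MeasurableEquiv.piFinSuccAbove (fun _ => ℝ) i ⁻¹' {p | |p.1| + ∑ k, |p.2 k| ≤ r} =
      l1Ball (Fin (m + 1)) r := by
  ext x
  simp [mem_l1Ball, Fin.sum_univ_succAbove _ i, Fin.removeNth]

theorem indicator_l1Ball_prod_apply {m : ℕ} (f : ℝ → ℝ) (r t : ℝ) (z : Fin m → ℝ) :
    {p : ℝ × (Fin m → ℝ) | |p.1| + ∑ k, |p.2 k| ≤ r}.indicator (fun p => f p.1) (t, z) =
      (l1Ball (Fin m) (r - |t|)).indicator (fun _ => f t) z := by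
  simp only [indicator, mem_ofPred_eq, mem_l1Ball, le_sub_iff_add_le']

theorem setIntegral_l1Ball_comp_eval {m : ℕ} (i : Fin (m + 1)) {f : ℝ → ℝ} (hf : Continuous f)
    (r : ℝ) :
    ∫ x in l1Ball (Fin (m + 1)) r, f (x i) =
      ∫ t, f t * volume.real (l1Ball (Fin m) (r - |t|)) := by
  let e := MeasurableEquiv.piFinSuccAbove (fun _ : Fin (m + 1) => ℝ) i
  let T : Set (ℝ × (Fin m → ℝ)) := {p | |p.1| + ∑ k, |p.2 k| ≤ r}
  have he : MeasurePreserving e := volume_preserving_piFinSuccAbove (fun _ => ℝ) i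
  have hT : MeasurableSet T :=
    measurableSet_le (measurable_fst.abs.add (Finset.measurable_sum _ fun k _ =>
      ((measurable_pi_apply k).comp measurable_snd).abs)) measurable_const
  have hfT : IntegrableOn (fun p : ℝ × (Fin m → ℝ) => f p.1) T := by
    rw [← he.integrableOn_comp_preimage e.measurableEmbedding, preimage_piFinSuccAbove_l1Ball]
    exact (hf.comp (continuous_apply i)).continuousOn.integrableOn_compact (isCompact_l1Ball r)
  calc ∫ x in l1Ball (Fin (m + 1)) r, f (x i)
      = ∫ x in e ⁻¹' T, f (e x).1 := by rw [preimage_piFinSuccAbove_l1Ball]; rfl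
    _ = ∫ p in T, f p.1 := he.setIntegral_preimage_emb e.measurableEmbedding (fun p => f p.1) T
    _ = ∫ t, ∫ z, T.indicator (fun p => f p.1) (t, z) := by
      rw [← integral_indicator hT, Measure.volume_eq_prod,
        integral_prod _ ((integrable_indicator_iff hT).2 hfT)]
    _ = ∫ t, f t * volume.real (l1Ball (Fin m) (r - |t|)) := by
      simp_rw [T, indicator_l1Ball_prod_apply,
        integral_indicator_const _ (isClosed_l1Ball _).measurableSet, smul_eq_mul, mul_comm]

theorem integral_sq_mul_sub_pow (m : ℕ) (r : ℝ) :
    ∫ s in (0 : ℝ)..r, s ^ 2 * (r - s) ^ m =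
      2 * m.factorial * r ^ (m + 3) / (m + 3).factorial := by
  have hexpand : ∀ s : ℝ,
      (r - s) ^ 2 * s ^ m = r ^ 2 * s ^ m - 2 * r * s ^ (m + 1) + s ^ (m + 2) := fun s => by ring
  have hint : ∀ k, IntervalIntegrable (fun s : ℝ => s ^ k) volume 0 r :=
    fun k => intervalIntegral.intervalIntegrable_pow k
  have hreflect := intervalIntegral.integral_comp_sub_left (fun s => s ^ 2 * (r - s) ^ m)
    (a := 0) (b := r) r
  simp only [sub_sub_cancel, sub_zero, sub_self] at hreflect
  simp only [← hreflect, hexpand]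
  rw [intervalIntegral.integral_add (((hint m).const_mul _).sub ((hint (m + 1)).const_mul _))
      (hint _), intervalIntegral.integral_sub ((hint m).const_mul _) ((hint (m + 1)).const_mul _),
    intervalIntegral.integral_const_mul, intervalIntegral.integral_const_mul,
    integral_pow, integral_pow, integral_pow]
  simp only [Nat.factorial_succ]
  push_cast
  field_simp
  ring

theorem l1_ball_second_moment_general (n : ℕ) (ρ : ℝ) (hρ : 0 < ρ) (i : Fin n) :
    ∫ x in {x : Fin n → ℝ | ∑ k, |x k| ≤ ρ}, (x i) ^ 2 =
      (2 * ρ) ^ (n + 1) * ρ / (n + 2).factorial := by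
  obtain ⟨m, rfl⟩ := Nat.exists_eq_succ_of_ne_zero i.pos.ne'
  set g : ℝ → ℝ := fun s => 2 ^ m / m.factorial * (s ^ 2 * (ρ - s) ^ m)
  have hslice : ∀ s, s ^ 2 * volume.real (l1Ball (Fin m) (ρ - s)) = (Iic ρ).indicator g s := by
    intro s
    by_cases hs : s ≤ ρ
    · simp only [measureReal_l1Ball, sub_nonneg, hs, ↓reduceIte, Fintype.card_fin, mem_Iic,
        indicator_of_mem, mul_pow]
      ring
    · simp [measureReal_l1Ball, hs]
  calc ∫ x in {x : Fin (m + 1) → ℝ | ∑ k, |x k| ≤ ρ}, (x i) ^ 2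
      = ∫ t, |t| ^ 2 * volume.real (l1Ball (Fin m) (ρ - |t|)) := by
        simp_rw [sq_abs]; exact setIntegral_l1Ball_comp_eval i (continuous_pow 2) ρ
    _ = 2 * ∫ s in Ioi 0, (Iic ρ).indicator g s := by
        simp_rw [hslice]; exact integral_comp_abs
    _ = 2 * (2 ^ m / m.factorial * ∫ s in (0 : ℝ)..ρ, s ^ 2 * (ρ - s) ^ m) := by
        rw [setIntegral_indicator measurableSet_Iic, Ioi_inter_Iic,
          ← intervalIntegral.integral_of_le hρ.le, intervalIntegral.integral_const_mul]
    _ = (2 * ρ) ^ (m + 1 + 1) * ρ / (m + 1 + 2).factorial := by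
        rw [integral_sq_mul_sub_pow]
        field_simp
        ring

theorem l1_ball_second_moment (n : ℕ) (hn : 1 ≤ n) (ρ : ℝ) (hρ : 0 < ρ) (i : Fin n) :
    ∫ x in {x : Fin n → ℝ | ∑ k, |x k| ≤ ρ}, (x i) ^ 2 =
      (2 * ρ) ^ (n + 1) * ρ / (n + 2).factorial :=
  l1_ball_second_moment_general n ρ hρ i
end

section
/- Let ρ > 0 and Γ with ρ/2 ≤ Γ ≤ ρ. The Lebesgue measure of the budget set {x ∈ ℝ^n : ‖x‖_1 ≤ ρ, ‖x‖_∞ ≤ Γ} equals ((2ρ)^n − n·(2(ρ−Γ))^n) / n!. -/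
open MeasureTheory

lemma l1ball_vol (n : ℕ) (hn : 1 ≤ n) (r : ℝ) (hr : 0 ≤ r) :
    volume {x : Fin n → ℝ | ∑ i, |x i| ≤ r} = ENNReal.ofReal ((2*r)^n / n.factorial) := by
  have : Nonempty (Fin n) := Fin.pos_iff_nonempty.mp hn
  have h := MeasureTheory.volume_sum_rpow_le (ι := Fin n) (p := 1) le_rfl r
  simp only [Real.rpow_one, one_div, inv_one, Fintype.card_fin, div_one] at h
  rw [h, (by norm_num : (1:ℝ) + 1 = 2), Real.Gamma_two, Real.Gamma_nat_eq_factorial,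
    ← ENNReal.ofReal_pow hr, ← ENNReal.ofReal_mul (by positivity)]
  congr 1
  rw [mul_one, mul_pow]
  ring

lemma msum (n : ℕ) : Measurable (fun x : Fin n → ℝ => ∑ i, |x i|) := by
  exact Finset.measurable_sum _ fun i _ => (measurable_pi_apply i).abs

lemma hyperplane_vol (n : ℕ) (k : Fin n) : volume {y : Fin n → ℝ | y k = 0} = 0 := by
  have : {y : Fin n → ℝ | y k = 0} = (LinearMap.ker (LinearMap.proj (R := ℝ)
      (φ := fun _ : Fin n => ℝ) k) : Submodule ℝ (Fin n → ℝ)) := by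
    ext y; simp [LinearMap.mem_ker]
  rw [this]
  apply Measure.addHaar_submodule
  intro h
  have := h ▸ Submodule.mem_top (R := ℝ) (x := Pi.single k (1:ℝ))
  simp [LinearMap.mem_ker] at this

lemma half_vol (n : ℕ) (k : Fin n) (r : ℝ) :
    volume {y : Fin n → ℝ | 0 < y k ∧ ∑ i, |y i| ≤ r} +
      volume {y : Fin n → ℝ | 0 < y k ∧ ∑ i, |y i| ≤ r} =
      volume {y : Fin n → ℝ | ∑ i, |y i| ≤ r} := by
  set P := {y : Fin n → ℝ | 0 < y k ∧ ∑ i, |y i| ≤ r}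
  set N := {y : Fin n → ℝ | y k < 0 ∧ ∑ i, |y i| ≤ r}
  have hPm : MeasurableSet P :=
    (measurableSet_lt measurable_const (measurable_pi_apply k)).inter
      (measurableSet_le (msum n) measurable_const)
  have hNm : MeasurableSet N :=
    (measurableSet_lt (measurable_pi_apply k) measurable_const).inter
      (measurableSet_le (msum n) measurable_const)
  have hNP : volume N = volume P := by
    have : N = -P := by
      ext y
      simp only [Set.mem_neg, Set.mem_setOf_eq, P, N, Pi.neg_apply, abs_neg]
      constructor
      · rintro ⟨h1, h2⟩; exact ⟨by linarith, h2⟩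
      · rintro ⟨h1, h2⟩; exact ⟨by linarith, h2⟩
    rw [this, Measure.measure_neg]
  have hsplit : {y : Fin n → ℝ | ∑ i, |y i| ≤ r} =
      (P ∪ N) ∪ {y : Fin n → ℝ | y k = 0 ∧ ∑ i, |y i| ≤ r} := by
    ext y
    simp only [Set.mem_union, Set.mem_setOf_eq, P, N]
    constructor
    · intro h
      rcases lt_trichotomy (y k) 0 with h' | h' | h'
      · exact Or.inl (Or.inr ⟨h', h⟩)
      · exact Or.inr ⟨h', h⟩
      · exact Or.inl (Or.inl ⟨h', h⟩)
    · rintro ((⟨_, h⟩ | ⟨_, h⟩) | ⟨_, h⟩) <;> exact h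
  have hz : volume {y : Fin n → ℝ | y k = 0 ∧ ∑ i, |y i| ≤ r} = 0 :=
    measure_mono_null (fun y hy => hy.1) (hyperplane_vol n k)
  rw [hsplit, measure_congr (MeasureTheory.union_ae_eq_left_of_ae_eq_empty (ae_eq_empty.mpr hz)),
    measure_union ?_ hNm, hNP]
  · rw [Set.disjoint_left]
    rintro y ⟨h1, -⟩ ⟨h2, -⟩
    exact absurd h1 (not_lt.mpr h2.le)

lemma corner_vol (n : ℕ) (k : Fin n) (ρ Γ : ℝ) (hΓ : 0 < Γ) :
    volume {x : Fin n → ℝ | ∑ i, |x i| ≤ ρ ∧ Γ < |x k|} =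
      volume {y : Fin n → ℝ | ∑ i, |y i| ≤ ρ - Γ} := by
  set Pp := {x : Fin n → ℝ | ∑ i, |x i| ≤ ρ ∧ Γ < x k}
  set Pn := {x : Fin n → ℝ | ∑ i, |x i| ≤ ρ ∧ x k < -Γ}
  have hPpm : MeasurableSet Pp :=
    (measurableSet_le (msum n) measurable_const).inter
      (measurableSet_lt measurable_const (measurable_pi_apply k))
  have hPnm : MeasurableSet Pn :=
    (measurableSet_le (msum n) measurable_const).inter
      (measurableSet_lt (measurable_pi_apply k) measurable_const)
  have hsplit : {x : Fin n → ℝ | ∑ i, |x i| ≤ ρ ∧ Γ < |x k|} = Pp ∪ Pn := by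
    ext x
    simp only [Set.mem_union, Set.mem_setOf_eq, Pp, Pn, lt_abs, lt_neg]
    tauto
  have hneg : volume Pn = volume Pp := by
    have : Pn = -Pp := by
      ext x
      simp only [Set.mem_neg, Set.mem_setOf_eq, Pp, Pn, Pi.neg_apply, abs_neg]
      constructor
      · rintro ⟨h1, h2⟩
        refine ⟨by simpa using h1, by linarith⟩
      · rintro ⟨h1, h2⟩
        refine ⟨by simpa using h1, by linarith⟩
    rw [this, Measure.measure_neg]
  have htrans : volume Pp = volume {y : Fin n → ℝ | 0 < y k ∧ ∑ i, |y i| ≤ ρ - Γ} := by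
    set c : Fin n → ℝ := fun i => if i = k then Γ else 0 with hc
    rw [← measure_preimage_add volume c Pp]
    congr 1
    ext y
    have hck : c k = Γ := if_pos rfl
    simp only [Set.mem_preimage, Set.mem_setOf_eq, Pp, Pi.add_apply, hck]
    have key : ∀ y : Fin n → ℝ, 0 < y k →
        ∑ i, |c i + y i| = Γ + ∑ i, |y i| := by
      intro y hy
      rw [← Finset.sum_erase_add _ _ (Finset.mem_univ k),
        ← Finset.sum_erase_add Finset.univ (fun i => |y i|) (Finset.mem_univ k)]
      have h2 : ∀ i ∈ Finset.univ.erase k, |c i + y i| = |y i| := by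
        intro i hi
        rw [hc]
        simp only [if_neg (Finset.ne_of_mem_erase hi), zero_add]
      rw [Finset.sum_congr rfl h2, hck, abs_of_pos (by linarith), abs_of_pos hy]
      ring
    constructor
    · rintro ⟨h1, h2⟩
      have hy : 0 < y k := by linarith
      refine ⟨hy, ?_⟩
      rw [key y hy] at h1; linarith
    · rintro ⟨h1, h2⟩
      refine ⟨?_, by linarith⟩
      rw [key y h1]; linarith
  have hdisj : Disjoint Pp Pn := by
    rw [Set.disjoint_left]
    rintro x ⟨-, h1⟩ ⟨-, h2⟩
    linarith
  rw [hsplit, measure_union hdisj hPnm, hneg, htrans, half_vol n k (ρ - Γ)]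

theorem budget_set_volume (n : ℕ) (hn : 1 ≤ n) (ρ Γ : ℝ) (hρ : 0 < ρ)
    (hΓ1 : ρ / 2 ≤ Γ) (hΓ2 : Γ ≤ ρ) :
    volume {x : Fin n → ℝ | ∑ i, |x i| ≤ ρ ∧ ∀ k, |x k| ≤ Γ} =
      ENNReal.ofReal (((2 * ρ) ^ n - n * (2 * (ρ - Γ)) ^ n) / n.factorial) := by
  have hΓpos : 0 < Γ := by linarith
  set B := {x : Fin n → ℝ | ∑ i, |x i| ≤ ρ} with hB
  set C : Fin n → Set (Fin n → ℝ) := fun k => {x | ∑ i, |x i| ≤ ρ ∧ Γ < |x k|} with hC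
  have hCm : ∀ k, MeasurableSet (C k) := fun k =>
    (measurableSet_le (msum n) measurable_const).inter
      (measurableSet_lt measurable_const (measurable_pi_apply k).abs)
  have hBm : MeasurableSet B := measurableSet_le (msum n) measurable_const
  -- the target set is B \ ⋃ C k
  have hset : {x : Fin n → ℝ | ∑ i, |x i| ≤ ρ ∧ ∀ k, |x k| ≤ Γ} = B \ ⋃ k, C k := by
    ext x
    simp only [Set.mem_diff, Set.mem_iUnion, Set.mem_setOf_eq, hB, hC, not_exists, not_and,
      not_lt]
    constructor
    · rintro ⟨h1, h2⟩; exact ⟨h1, fun k _ => h2 k⟩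
    · rintro ⟨h1, h2⟩; exact ⟨h1, fun k => h2 k h1⟩
  -- disjointness of corners
  have hdisj : Pairwise (Function.onFun Disjoint C) := by
    intro j k hjk
    rw [Function.onFun, Set.disjoint_left]
    rintro x ⟨hs, hj⟩ ⟨-, hk⟩
    have hle : |x j| + |x k| ≤ ∑ i, |x i| := by
      have : ({j, k} : Finset (Fin n)) ⊆ Finset.univ := Finset.subset_univ _
      calc |x j| + |x k| = ∑ i ∈ ({j, k} : Finset (Fin n)), |x i| := by
            rw [Finset.sum_pair hjk]
        _ ≤ ∑ i, |x i| :=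
            Finset.sum_le_sum_of_subset_of_nonneg this (fun i _ _ => abs_nonneg _)
    linarith
  have hCsub : (⋃ k, C k) ⊆ B := by
    intro x hx
    obtain ⟨k, hk⟩ := Set.mem_iUnion.mp hx
    exact hk.1
  have hCvol : ∀ k, volume (C k) = ENNReal.ofReal ((2 * (ρ - Γ)) ^ n / n.factorial) := by
    intro k
    rw [hC]
    rw [corner_vol n k ρ Γ hΓpos, l1ball_vol n hn (ρ - Γ) (by linarith)]
  have hUvol : volume (⋃ k, C k) = n * ENNReal.ofReal ((2 * (ρ - Γ)) ^ n / n.factorial) := by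
    rw [measure_iUnion hdisj hCm, tsum_fintype]
    simp only [hCvol, Finset.sum_const, Finset.card_univ, Fintype.card_fin, nsmul_eq_mul]
  have hUne : volume (⋃ k, C k) ≠ ⊤ := by
    rw [hUvol]; exact ENNReal.mul_ne_top (by simp) ENNReal.ofReal_ne_top
  rw [hset, measure_diff hCsub (MeasurableSet.iUnion hCm).nullMeasurableSet hUne,
    hUvol, l1ball_vol n hn ρ hρ.le]
  rw [(by simp : ((n : ENNReal)) = ENNReal.ofReal (n : ℝ)),
    ← ENNReal.ofReal_mul (by positivity), ← ENNReal.ofReal_sub _ (mul_nonneg (Nat.cast_nonneg n) (div_nonneg (pow_nonneg (by linarith) n) (Nat.cast_nonneg _)))]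
  congr 1
  field_simp
end

section
/- For a matrix Δ ∈ ℝ^{n×k} integrated over {Δ : ‖Δ‖_{F_1} ≤ ρ}, where ‖Δ‖_{F_1} is the sum of absolute values of all entries, the matrix-valued integral ∫ Δᵀ Δ dΔ equals ((2ρ)^{nk+1} · ρ · n / (nk+2)!) · I_k. -/
open MeasureTheory Set

noncomputable def l1g (d : ℕ) (s : ℝ) : ℝ := if 0 ≤ s then (2*s)^d / d.factorial else 0

lemma l1g_nonneg (d : ℕ) (s : ℝ) : 0 ≤ l1g d s := by
  unfold l1g; split <;> positivity

theorem key_lint (d : ℕ) (r : ℝ) :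
    ∫⁻ t : ℝ, ENNReal.ofReal (l1g d (r - |t|)) = ENNReal.ofReal (l1g (d+1) r) := by
  by_cases hr : 0 ≤ r
  swap
  · have hz : ∀ t : ℝ, l1g d (r - |t|) = 0 := by
      intro t; rw [l1g, if_neg]; push_neg; have := abs_nonneg t; linarith [not_le.mp hr]
    rw [l1g, if_neg hr]
    simp [hz]
  have hind : (fun t : ℝ => l1g d (r - |t|))
      = indicator (Icc (-r) r) (fun t => (2*(r-|t|))^d / d.factorial) := by
    funext t
    by_cases ht : |t| ≤ r
    · rw [indicator_of_mem (mem_Icc.mpr (abs_le.mp ht)), l1g, if_pos (by linarith)]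
    · rw [indicator_of_notMem (fun hm => ht (abs_le.mpr (mem_Icc.mp hm))), l1g,
        if_neg (by push_neg; linarith [not_le.mp ht])]
  have hint : Integrable (fun t : ℝ => l1g d (r - |t|)) := by
    rw [hind]
    exact ((Continuous.integrableOn_Icc (by continuity))).integrable_indicator measurableSet_Icc
  have h0 : 0 ≤ᵐ[volume] fun t : ℝ => l1g d (r - |t|) :=
    Filter.Eventually.of_forall fun t => l1g_nonneg _ _
  rw [← ofReal_integral_eq_lintegral_ofReal hint h0]
  congr 1
  rw [integral_comp_abs (f := fun u => l1g d (r - u))]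
  have hiic : (fun u : ℝ => l1g d (r - u))
      = indicator (Iic r) (fun u => (2*(r-u))^d / d.factorial) := by
    funext u
    by_cases hu : u ≤ r
    · rw [indicator_of_mem (mem_Iic.mpr hu), l1g, if_pos (by linarith)]
    · rw [indicator_of_notMem (fun hm => hu (mem_Iic.mp hm)), l1g,
        if_neg (by push_neg; linarith [not_le.mp hu])]
  rw [hiic, setIntegral_indicator measurableSet_Iic, Ioi_inter_Iic,
    ← intervalIntegral.integral_of_le hr,
    intervalIntegral.integral_comp_sub_left (fun u => (2*u)^d / (d.factorial:ℝ)) r]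
  simp only [sub_zero, sub_self]
  have hfun : ∀ x : ℝ, (2*x)^d / (d.factorial:ℝ) = (2^d/(d.factorial:ℝ)) * x^d := by
    intro x; rw [mul_pow]; ring
  simp_rw [hfun]
  rw [intervalIntegral.integral_const_mul, integral_pow]
  rw [l1g, if_pos hr, Nat.factorial_succ, mul_pow]
  have h1 : (d.factorial:ℝ) ≠ 0 := Nat.cast_ne_zero.mpr d.factorial_ne_zero
  have h2 : ((d+1:ℕ):ℝ) ≠ 0 := Nat.cast_ne_zero.mpr (Nat.succ_ne_zero d)
  push_cast
  field_simp
  ring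

theorem l1vol (d : ℕ) (r : ℝ) :
    volume {x : Fin d → ℝ | ∑ i, |x i| ≤ r} = ENNReal.ofReal (l1g d r) := by
  induction d generalizing r with
  | zero =>
      by_cases hr : 0 ≤ r
      · have hu : {x : Fin 0 → ℝ | ∑ i, |x i| ≤ r} = univ := by ext x; simp [hr]
        rw [hu, l1g]
        simp only [hr, if_true]
        rw [volume_pi, Measure.pi_univ]
        simp
      · have hu : {x : Fin 0 → ℝ | ∑ i, |x i| ≤ r} = (∅ : Set _) := by
          ext x; simp [hr]
        rw [hu, l1g]
        simp [hr]
  | succ d ih =>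
      have mp := volume_preserving_piFinSuccAbove (fun _ : Fin (d+1) => ℝ) 0
      have hT : MeasurableSet {p : ℝ × (Fin d → ℝ) | |p.1| + ∑ j, |p.2 j| ≤ r} := by
        apply measurableSet_le _ measurable_const
        exact measurable_fst.abs.add
          (Finset.measurable_sum _ fun j _ => ((measurable_pi_apply j).comp measurable_snd).abs)
      have hpre : {x : Fin (d+1) → ℝ | ∑ i, |x i| ≤ r}
          = (MeasurableEquiv.piFinSuccAbove (fun _ : Fin (d+1) => ℝ) 0) ⁻¹'
            {p : ℝ × (Fin d → ℝ) | |p.1| + ∑ j, |p.2 j| ≤ r} := by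
        ext x
        simp only [mem_setOf_eq, mem_preimage, MeasurableEquiv.piFinSuccAbove_apply, Fin.insertNthEquiv, Equiv.coe_fn_symm_mk, Fin.removeNth]
        rw [Fin.sum_univ_succAbove (fun i => |x i|) 0]
      rw [hpre, mp.measure_preimage hT.nullMeasurableSet, Measure.volume_eq_prod, Measure.prod_apply hT]
      have hslice : ∀ t : ℝ,
          (Prod.mk t ⁻¹' {p : ℝ × (Fin d → ℝ) | |p.1| + ∑ j, |p.2 j| ≤ r})
            = {y : Fin d → ℝ | ∑ j, |y j| ≤ r - |t|} := by
        intro t; ext y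
        simp only [mem_preimage, mem_setOf_eq]
        constructor <;> intro h <;> linarith
      simp_rw [hslice, ih]
      exact key_lint d r

theorem key_lint2 (d : ℕ) (r : ℝ) (hr : 0 ≤ r) :
    ∫⁻ t : ℝ, ENNReal.ofReal (t^2 * l1g d (r - |t|)) =
      ENNReal.ofReal (2^(d+2) * r^(d+3) / (d+3).factorial) := by
  have hind : (fun t : ℝ => t^2 * l1g d (r - |t|))
      = indicator (Icc (-r) r) (fun t => t^2 * ((2*(r-|t|))^d / d.factorial)) := by
    funext t
    by_cases ht : |t| ≤ r
    · rw [indicator_of_mem (mem_Icc.mpr (abs_le.mp ht)), l1g, if_pos (by linarith)]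
    · rw [indicator_of_notMem (fun hm => ht (abs_le.mpr (mem_Icc.mp hm))), l1g,
        if_neg (by push_neg; linarith [not_le.mp ht]), mul_zero]
  have hint : Integrable (fun t : ℝ => t^2 * l1g d (r - |t|)) := by
    rw [hind]
    exact ((Continuous.integrableOn_Icc (by continuity))).integrable_indicator measurableSet_Icc
  have h0 : 0 ≤ᵐ[volume] fun t : ℝ => t^2 * l1g d (r - |t|) :=
    Filter.Eventually.of_forall fun t => mul_nonneg (sq_nonneg t) (l1g_nonneg _ _)
  rw [← ofReal_integral_eq_lintegral_ofReal hint h0]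
  congr 1
  have habs : ∀ t : ℝ, t^2 * l1g d (r - |t|) = (fun u => u^2 * l1g d (r - u)) |t| := by
    intro t; simp only [sq_abs]
  simp_rw [habs]
  rw [integral_comp_abs (f := fun u => u^2 * l1g d (r - u))]
  have hiic : (fun u : ℝ => u^2 * l1g d (r - u))
      = indicator (Iic r) (fun u => u^2 * ((2*(r-u))^d / d.factorial)) := by
    funext u
    by_cases hu : u ≤ r
    · rw [indicator_of_mem (mem_Iic.mpr hu), l1g, if_pos (by linarith)]
    · rw [indicator_of_notMem (fun hm => hu (mem_Iic.mp hm)), l1g,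
        if_neg (by push_neg; linarith [not_le.mp hu]), mul_zero]
  rw [hiic, setIntegral_indicator measurableSet_Iic, Ioi_inter_Iic,
    ← intervalIntegral.integral_of_le hr]
  have hstep : ∀ x : ℝ, x^2 * ((2*(r-x))^d / (d.factorial:ℝ))
      = (fun u => (r-u)^2 * ((2*u)^d / (d.factorial:ℝ))) (r - x) := by
    intro x; simp only [sub_sub_cancel]
  simp_rw [hstep]
  rw [intervalIntegral.integral_comp_sub_left (fun u => (r-u)^2 * ((2*u)^d / (d.factorial:ℝ))) r]
  simp only [sub_zero, sub_self]
  have h1 : (d.factorial:ℝ) ≠ 0 := Nat.cast_ne_zero.mpr d.factorial_ne_zero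
  have hfun : (fun u : ℝ => (r-u)^2 * ((2*u)^d / (d.factorial:ℝ)))
      = fun u : ℝ => (2^d*r^2/(d.factorial:ℝ)) * u^d +
        ((-(2^(d+1)*r/(d.factorial:ℝ))) * u^(d+1) + (2^d/(d.factorial:ℝ)) * u^(d+2)) := by
    funext u; rw [mul_pow]; field_simp; ring
  rw [hfun]
  rw [intervalIntegral.integral_add ((intervalIntegral.intervalIntegrable_pow d).const_mul _)
      (((intervalIntegral.intervalIntegrable_pow (d+1)).const_mul _).add
        ((intervalIntegral.intervalIntegrable_pow (d+2)).const_mul _)),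
    intervalIntegral.integral_add ((intervalIntegral.intervalIntegrable_pow (d+1)).const_mul _)
      ((intervalIntegral.intervalIntegrable_pow (d+2)).const_mul _)]
  rw [intervalIntegral.integral_const_mul, intervalIntegral.integral_const_mul,
    intervalIntegral.integral_const_mul, integral_pow, integral_pow, integral_pow]
  rw [show d+3 = (d+2)+1 from rfl, Nat.factorial_succ, show d+2 = (d+1)+1 from rfl,
    Nat.factorial_succ, Nat.factorial_succ]
  have h2 : ((d:ℝ)+1) ≠ 0 := by positivity
  have h3 : ((d:ℝ)+2) ≠ 0 := by positivity
  have h4 : ((d:ℝ)+3) ≠ 0 := by positivity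
  push_cast
  simp only [ne_eq, zero_pow, pow_succ]
  field_simp
  ring

theorem l1moment (d : ℕ) (hd : d ≠ 0) (r : ℝ) (hr : 0 ≤ r) (i₀ : Fin d) :
    ∫⁻ x in {x : Fin d → ℝ | ∑ i, |x i| ≤ r}, ENNReal.ofReal ((x i₀)^2) =
      ENNReal.ofReal (2^(d+1) * r^(d+2) / (d+2).factorial) := by
  obtain ⟨d, rfl⟩ := Nat.exists_eq_succ_of_ne_zero hd
  have mp := volume_preserving_piFinSuccAbove (fun _ : Fin (d+1) => ℝ) i₀
  have hT : MeasurableSet {p : ℝ × (Fin d → ℝ) | |p.1| + ∑ j, |p.2 j| ≤ r} := by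
    apply measurableSet_le _ measurable_const
    exact measurable_fst.abs.add
      (Finset.measurable_sum _ fun j _ => ((measurable_pi_apply j).comp measurable_snd).abs)
  have hS : MeasurableSet {x : Fin (d+1) → ℝ | ∑ i, |x i| ≤ r} := by
    apply measurableSet_le _ measurable_const
    exact Finset.measurable_sum _ fun i _ => (measurable_pi_apply i).abs
  rw [← lintegral_indicator hS]
  have hcomp : ∀ x : Fin (d+1) → ℝ,
      ({x : Fin (d+1) → ℝ | ∑ i, |x i| ≤ r}).indicator (fun x => ENNReal.ofReal ((x i₀)^2)) x
      = ({p : ℝ × (Fin d → ℝ) | |p.1| + ∑ j, |p.2 j| ≤ r}).indicator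
          (fun p => ENNReal.ofReal (p.1^2))
          (MeasurableEquiv.piFinSuccAbove (fun _ : Fin (d+1) => ℝ) i₀ x) := by
    intro x
    have hmem : (MeasurableEquiv.piFinSuccAbove (fun _ : Fin (d+1) => ℝ) i₀ x
        ∈ {p : ℝ × (Fin d → ℝ) | |p.1| + ∑ j, |p.2 j| ≤ r}) ↔ (∑ i, |x i| ≤ r) := by
      simp only [mem_setOf_eq, MeasurableEquiv.piFinSuccAbove_apply, Fin.insertNthEquiv,
        Equiv.coe_fn_symm_mk, Fin.removeNth]
      rw [Fin.sum_univ_succAbove (fun i => |x i|) i₀]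
    have hval : (MeasurableEquiv.piFinSuccAbove (fun _ : Fin (d+1) => ℝ) i₀ x).1 = x i₀ := rfl
    simp only [mem_setOf_eq] at hmem
    simp only [indicator_apply, mem_setOf_eq]
    by_cases h : ∑ i, |x i| ≤ r
    · rw [if_pos h, if_pos (hmem.mpr h), hval]
    · rw [if_neg h, if_neg (fun hm => h (hmem.mp hm))]
  simp_rw [hcomp]
  rw [mp.lintegral_comp ((measurable_fst.pow_const 2).ennreal_ofReal.indicator hT)]
  rw [Measure.volume_eq_prod, lintegral_prod _
    ((measurable_fst.pow_const 2).ennreal_ofReal.indicator hT).aemeasurable]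
  have hinner : ∀ t : ℝ, (∫⁻ y : Fin d → ℝ, ({p : ℝ × (Fin d → ℝ) | |p.1| + ∑ j, |p.2 j| ≤ r}).indicator
      (fun p => ENNReal.ofReal (p.1^2)) (t, y)) = ENNReal.ofReal (t^2 * l1g d (r - |t|)) := by
    intro t
    have hsl : ∀ y : Fin d → ℝ, ({p : ℝ × (Fin d → ℝ) | |p.1| + ∑ j, |p.2 j| ≤ r}).indicator
        (fun p => ENNReal.ofReal (p.1^2)) (t, y)
        = ({y : Fin d → ℝ | ∑ j, |y j| ≤ r - |t|}).indicator (fun _ => ENNReal.ofReal (t^2)) y := by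
      intro y
      simp only [indicator_apply, mem_setOf_eq]
      by_cases h : ∑ j, |y j| ≤ r - |t|
      · rw [if_pos h, if_pos (by linarith)]
      · rw [if_neg h, if_neg (fun hm : |t| + ∑ j, |y j| ≤ r => h (by linarith))]
    simp_rw [hsl]
    rw [lintegral_indicator (by
      apply measurableSet_le _ measurable_const
      exact Finset.measurable_sum _ fun j _ => (measurable_pi_apply j).abs),
      setLIntegral_const, l1vol, ← ENNReal.ofReal_mul (sq_nonneg t)]
  simp_rw [hinner]
  exact key_lint2 d r hr

theorem mp_uncurry (n k : ℕ) :
    MeasurePreserving (fun (Δ : Fin n → Fin k → ℝ) (p : Fin n × Fin k) => Δ p.1 p.2)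
      volume volume := by
  have hm : Measurable (fun (Δ : Fin n → Fin k → ℝ) (p : Fin n × Fin k) => Δ p.1 p.2) := by
    apply measurable_pi_iff.mpr fun p => ?_
    exact (measurable_pi_apply p.2).comp (measurable_pi_apply p.1)
  refine ⟨hm, ?_⟩
  rw [show (volume : Measure (Fin n × Fin k → ℝ)) = Measure.pi fun _ => volume from volume_pi]
  refine (Measure.pi_eq fun s hs => ?_).symm
  rw [Measure.map_apply hm (MeasurableSet.univ_pi hs)]
  have hpre : (fun (Δ : Fin n → Fin k → ℝ) (p : Fin n × Fin k) => Δ p.1 p.2) ⁻¹' (univ.pi s)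
      = univ.pi (fun a => univ.pi fun b => s (a,b)) := by
    ext Δ
    simp only [mem_preimage, mem_pi, mem_univ, forall_true_left, Prod.forall]
  rw [hpre, volume_pi_pi]
  simp_rw [volume_pi_pi]
  rw [Fintype.prod_prod_type]

theorem mp_negcol (n k : ℕ) (i : Fin k) :
    MeasurePreserving (fun (Δ : Fin n → Fin k → ℝ) (a : Fin n) (b : Fin k) =>
      if b = i then -Δ a b else Δ a b) volume volume := by
  have inner : ∀ b : Fin k, MeasurePreserving
      (fun x : ℝ => if b = i then -x else x) volume volume := by
    intro b
    by_cases h : b = i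
    · simp only [h, if_true]
      exact Measure.measurePreserving_neg volume
    · simp only [h, if_false]
      exact MeasurePreserving.id volume
  have row : MeasurePreserving (fun (v : Fin k → ℝ) (b : Fin k) =>
      if b = i then -v b else v b) volume volume := volume_preserving_pi inner
  exact volume_preserving_pi (fun _ : Fin n => row)


theorem l1_gram_integral (n k : ℕ) (hn : 1 ≤ n) (hk : 1 ≤ k) (ρ : ℝ) (hρ : 0 < ρ)
    (i j : Fin k) :
    ∫ Δ in {Δ : Fin n → Fin k → ℝ | ∑ a, ∑ b, |Δ a b| ≤ ρ},
        (∑ ℓ, Δ ℓ i * Δ ℓ j) =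
      ((2 * ρ) ^ (n * k + 1) * ρ * n / (n * k + 2).factorial) * (if i = j then 1 else 0) := by
  have hS : MeasurableSet {Δ : Fin n → Fin k → ℝ | ∑ a, ∑ b, |Δ a b| ≤ ρ} := by
    apply measurableSet_le _ measurable_const
    apply Finset.measurable_sum _ fun a _ => ?_
    apply Finset.measurable_sum _ fun b _ => ?_
    exact ((measurable_pi_apply b).comp (measurable_pi_apply a)).abs
  rcases eq_or_ne i j with h | h
  · subst h
    rw [if_pos rfl, mul_one]
    simp_rw [← pow_two]
    have hnn : 0 ≤ᵐ[volume.restrict {Δ : Fin n → Fin k → ℝ | ∑ a, ∑ b, |Δ a b| ≤ ρ}]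
        fun Δ : Fin n → Fin k → ℝ => ∑ ℓ, (Δ ℓ i)^2 :=
      Filter.Eventually.of_forall fun Δ => Finset.sum_nonneg fun ℓ _ => sq_nonneg _
    have hmeas : Measurable (fun Δ : Fin n → Fin k → ℝ => ∑ ℓ, (Δ ℓ i)^2) :=
      Finset.measurable_sum _ fun ℓ _ =>
        ((measurable_pi_apply i).comp (measurable_pi_apply ℓ)).pow_const 2
    rw [integral_eq_lintegral_of_nonneg_ae hnn hmeas.aestronglyMeasurable]
    have hofr : ∀ Δ : Fin n → Fin k → ℝ,
        ENNReal.ofReal (∑ ℓ, (Δ ℓ i)^2) = ∑ ℓ, ENNReal.ofReal ((Δ ℓ i)^2) := fun Δ =>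
      ENNReal.ofReal_sum_of_nonneg (fun ℓ _ => sq_nonneg _)
    simp_rw [hofr]
    rw [lintegral_finset_sum _ (fun ℓ _ =>
      (((measurable_pi_apply i).comp (measurable_pi_apply ℓ)).pow_const 2).ennreal_ofReal)]
    have hd0 : n * k ≠ 0 := Nat.mul_ne_zero (by omega) (by omega)
    have hterm : ∀ ℓ : Fin n,
        ∫⁻ Δ in {Δ : Fin n → Fin k → ℝ | ∑ a, ∑ b, |Δ a b| ≤ ρ},
          ENNReal.ofReal ((Δ ℓ i)^2)
        = ENNReal.ofReal (2^(n*k+1) * ρ^(n*k+2) / (n*k+2).factorial) := by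
      intro ℓ
      have mpΨ := (volume_measurePreserving_piCongrLeft (fun _ : Fin (n*k) => ℝ)
        finProdFinEquiv).comp (mp_uncurry n k)
      set Ψ := (MeasurableEquiv.piCongrLeft (fun _ : Fin (n*k) => ℝ) finProdFinEquiv) ∘
        (fun (Δ : Fin n → Fin k → ℝ) (p : Fin n × Fin k) => Δ p.1 p.2) with hΨ
      have happ : ∀ (Δ : Fin n → Fin k → ℝ) (p : Fin n × Fin k),
          Ψ Δ (finProdFinEquiv p) = Δ p.1 p.2 := by
        intro Δ p
        simp only [hΨ, Function.comp_apply, MeasurableEquiv.coe_piCongrLeft,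
          Equiv.piCongrLeft_apply_apply]
      have hsum : ∀ Δ : Fin n → Fin k → ℝ, ∑ e, |Ψ Δ e| = ∑ a, ∑ b, |Δ a b| := by
        intro Δ
        rw [← Equiv.sum_comp finProdFinEquiv (fun e => |Ψ Δ e|)]
        simp_rw [happ]
        rw [Fintype.sum_prod_type]
      have hBall : MeasurableSet {y : Fin (n*k) → ℝ | ∑ e, |y e| ≤ ρ} := by
        apply measurableSet_le _ measurable_const
        exact Finset.measurable_sum _ fun e _ => (measurable_pi_apply e).abs
      rw [← lintegral_indicator hS]
      have hcomp : ∀ Δ : Fin n → Fin k → ℝ,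
          ({Δ : Fin n → Fin k → ℝ | ∑ a, ∑ b, |Δ a b| ≤ ρ}).indicator
            (fun Δ => ENNReal.ofReal ((Δ ℓ i)^2)) Δ
          = ({y : Fin (n*k) → ℝ | ∑ e, |y e| ≤ ρ}).indicator
              (fun y => ENNReal.ofReal ((y (finProdFinEquiv (ℓ, i)))^2)) (Ψ Δ) := by
        intro Δ
        simp only [indicator_apply, mem_setOf_eq, hsum, happ]
      simp_rw [hcomp]
      rw [mpΨ.lintegral_comp (((measurable_pi_apply
        (finProdFinEquiv (ℓ, i))).pow_const 2).ennreal_ofReal.indicator hBall)]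
      rw [lintegral_indicator hBall]
      have := l1moment (n*k) hd0 ρ hρ.le (finProdFinEquiv (ℓ, i))
      exact this
    simp_rw [hterm]
    rw [Finset.sum_const, Finset.card_univ, Fintype.card_fin, nsmul_eq_mul,
      ENNReal.toReal_mul, ENNReal.toReal_natCast, ENNReal.toReal_ofReal (by positivity)]
    rw [mul_pow]
    ring
  · rw [if_neg h, mul_zero]
    have mpν := mp_negcol n k i
    let νE : (Fin n → Fin k → ℝ) ≃ᵐ (Fin n → Fin k → ℝ) :=
      { toEquiv := ⟨fun Δ a b => if b = i then -Δ a b else Δ a b,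
                    fun Δ a b => if b = i then -Δ a b else Δ a b,
                    fun Δ => by funext a b; by_cases hbi : b = i <;> simp [hbi],
                    fun Δ => by funext a b; by_cases hbi : b = i <;> simp [hbi]⟩
        measurable_toFun := mpν.measurable
        measurable_invFun := mpν.measurable }
    have hemb : MeasurableEmbedding
        (fun (Δ : Fin n → Fin k → ℝ) (a : Fin n) (b : Fin k) =>
          if b = i then -Δ a b else Δ a b) := νE.measurableEmbedding
    rw [← integral_indicator hS]
    set F := indicator {Δ : Fin n → Fin k → ℝ | ∑ a, ∑ b, |Δ a b| ≤ ρ}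
      (fun Δ => ∑ ℓ, Δ ℓ i * Δ ℓ j) with hF
    have habs : ∀ (Δ : Fin n → Fin k → ℝ) (a : Fin n) (b : Fin k),
        |if b = i then -Δ a b else Δ a b| = |Δ a b| := by
      intro Δ a b; split <;> simp
    have hFν : ∀ Δ : Fin n → Fin k → ℝ,
        F (fun a b => if b = i then -Δ a b else Δ a b) = -F Δ := by
      intro Δ
      rw [hF]
      simp only [indicator_apply, mem_setOf_eq, habs]
      split_ifs with hmem hji
      · exact absurd hji.symm h
      · rw [← Finset.sum_neg_distrib]
        exact Finset.sum_congr rfl fun ℓ _ => by ring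
      · exact neg_zero.symm
    have h1 : ∫ Δ, F Δ = ∫ Δ : Fin n → Fin k → ℝ,
        F (fun a b => if b = i then -Δ a b else Δ a b) := (mpν.integral_comp hemb F).symm
    have h2 : ∫ Δ, F Δ = - ∫ Δ, F Δ := by
      conv_lhs => rw [h1]
      simp_rw [hFν]
      rw [integral_neg]
    linarith
end

section
/- Fix X ∈ ℝ^{n×k} and y ∈ ℝ^n, and let U be the set of matrices Δ ∈ ℝ^{n×k} whose every entry has absolute value at most ρ > 0. Then for every β ∈ ℝ^k, ∫_U ‖y − (X + Δ)β‖_2^2 dΔ = (2ρ)^{nk} · (‖y − Xβ‖_2^2 + (nρ^2/3)·‖β‖_2^2). Consequently, minimizing the averaged squared residual over U is equivalent to ridge regression with penalty λ = nρ^2/3. -/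
/-!
Up to the factor `(2ρ)^(nk)`, Lebesgue measure on the box is the product of uniform laws on
`[-ρ, ρ]`, so the entries of `Δ` are independent, centred and of variance `ρ² / 3`. In row `a`,
`y a - ((X + Δ) β) a` is the constant `(y - X β) a` minus the centred sum `∑ b, Δ a b * β b`, whose
variance is `ρ² / 3 * ‖β‖²`; hence its mean square is `(y - X β) a ^ 2 + ρ² / 3 * ‖β‖²`.
Summing over the `n` rows gives the formula, and the equivalence of the two minimisation problems
follows because `(2ρ)^(nk) > 0`.
-/

open MeasureTheory ProbabilityTheory Set
open scoped NNReal ENNReal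

theorem MeasureTheory.Measure.pi_nnreal_smul {ι : Type*} [Fintype ι] {α : ι → Type*}
    [∀ i, MeasurableSpace (α i)] (μ : ∀ i, Measure (α i)) [∀ i, SigmaFinite (μ i)] (c : ℝ≥0) :
    Measure.pi (fun i => c • μ i) = c ^ Fintype.card ι • Measure.pi μ :=
  Measure.pi_eq fun s _ => by
    simp only [Measure.smul_apply, Measure.pi_pi, ENNReal.smul_def, smul_eq_mul,
      ENNReal.coe_pow, Finset.prod_mul_distrib, Finset.prod_const, Finset.card_univ]

theorem MeasureTheory.Measure.restrict_eq_smul_cond {Ω : Type*} [MeasurableSpace Ω]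
    (μ : Measure Ω) {s : Set Ω} (h0 : μ s ≠ 0) (htop : μ s ≠ ∞) :
    μ.restrict s = μ s • μ[|s] := by
  rw [ProbabilityTheory.cond, smul_smul, ENNReal.mul_inv_cancel h0 htop, one_smul]

section UniformIcc

variable {a b : ℝ}

theorem isProbabilityMeasure_cond_Icc (hab : a < b) : IsProbabilityMeasure (volume[|Icc a b]) :=
  cond_isProbabilityMeasure_of_finite (by simp [hab]) (by simp)

theorem integral_cond_Icc (hab : a < b) (f : ℝ → ℝ) :
    ∫ x, f x ∂volume[|Icc a b] = (b - a)⁻¹ * ∫ x in a..b, f x := by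
  rw [ProbabilityTheory.cond, integral_smul_measure, Real.volume_Icc, ENNReal.toReal_inv,
    ENNReal.toReal_ofReal (sub_nonneg.2 hab.le), smul_eq_mul,
    intervalIntegral.integral_of_le hab.le, integral_Icc_eq_integral_Ioc]

theorem memLp_id_cond_Icc (hab : a < b) : MemLp id 2 (volume[|Icc a b]) :=
  have := isProbabilityMeasure_cond_Icc hab
  MemLp.of_bound aestronglyMeasurable_id (max |a| |b|)
    ((ae_cond_mem measurableSet_Icc).mono fun _ hx => abs_le_max_abs_abs hx.1 hx.2)

theorem integral_id_cond_Icc (hab : a < b) : ∫ x, x ∂volume[|Icc a b] = (a + b) / 2 := by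
  rw [integral_cond_Icc hab, integral_id]
  field_simp [(sub_pos.2 hab).ne']
  ring

theorem variance_id_cond_Icc (hab : a < b) : Var[id; volume[|Icc a b]] = (b - a) ^ 2 / 12 := by
  have := isProbabilityMeasure_cond_Icc hab
  rw [variance_eq_sub (memLp_id_cond_Icc hab)]
  simp only [Pi.pow_apply, id_eq]
  rw [integral_cond_Icc hab, integral_pow, integral_id_cond_Icc hab]
  field_simp [(sub_pos.2 hab).ne']
  ring

end UniformIcc

section LinearNoise

variable {κ : Type*} [Fintype κ] {μ : Measure ℝ} [IsProbabilityMeasure μ]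

theorem memLp_eval_mul_pi (hμ : MemLp id 2 μ) (b : κ) (c : ℝ) :
    MemLp (fun x : κ → ℝ => x b * c) 2 (Measure.pi fun _ => μ) :=
  (hμ.mul_const c).comp_measurePreserving (measurePreserving_eval _ b)

theorem memLp_sum_mul_pi (hμ : MemLp id 2 μ) (β : κ → ℝ) :
    MemLp (fun x : κ → ℝ => ∑ b, x b * β b) 2 (Measure.pi fun _ => μ) :=
  memLp_finsetSum _ fun b _ => memLp_eval_mul_pi hμ b (β b)

theorem integral_sub_sum_mul_sq_pi (hμ : MemLp id 2 μ) (h0 : ∫ t, t ∂μ = 0) (r : ℝ)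
    (β : κ → ℝ) :
    ∫ x, (r - ∑ b, x b * β b) ^ 2 ∂Measure.pi (fun _ => μ) =
      r ^ 2 + Var[id; μ] * ∑ b, β b ^ 2 := by
  set P := Measure.pi fun _ : κ => μ
  set S : (κ → ℝ) → ℝ := fun x => ∑ b, x b * β b
  have hS : MemLp S 2 P := memLp_sum_mul_pi hμ β
  have hmean : ∫ x, S x ∂P = 0 := by
    rw [integral_finsetSum _ fun b _ => (memLp_eval_mul_pi hμ b (β b)).integrable one_le_two]
    refine Finset.sum_eq_zero fun b _ => ?_
    rw [integral_mul_const, integral_eval, h0, zero_mul]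
  have hvar : Var[S; P] = Var[id; μ] * ∑ b, β b ^ 2 := by
    have hsum : S = ∑ b, fun x : κ → ℝ => x b * β b := by
      ext x
      simp [S, Finset.sum_apply]
    rw [hsum, variance_sum_pi (X := fun b t => t * β b) fun b => hμ.mul_const (β b),
      Finset.mul_sum]
    exact Finset.sum_congr rfl fun b _ => by rw [variance_mul_const]; rfl
  have key := variance_eq_sub (X := fun x => r - S x) ((memLp_const r).sub hS)
  rw [variance_const_sub hS.aestronglyMeasurable, hvar, integral_sub (integrable_const r)
    (hS.integrable one_le_two), hmean, integral_const] at key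
  simp only [Pi.pow_apply, probReal_univ, smul_eq_mul, one_mul, sub_zero] at key
  linarith

theorem integral_sum_sq_residual_pi {ι : Type*} [Fintype ι] (hμ : MemLp id 2 μ)
    (h0 : ∫ t, t ∂μ = 0) (X : ι → κ → ℝ) (y : ι → ℝ) (β : κ → ℝ) :
    ∫ Δ, ∑ a, (y a - ∑ b, (X a b + Δ a b) * β b) ^ 2
        ∂Measure.pi (fun _ : ι => Measure.pi fun _ : κ => μ) =
      ∑ a, (y a - ∑ b, X a b * β b) ^ 2 + Fintype.card ι * Var[id; μ] * ∑ b, β b ^ 2 := by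
  set r : ι → ℝ := fun a => y a - ∑ b, X a b * β b
  have hrow : ∀ (a : ι) (Δ : ι → κ → ℝ),
      y a - ∑ b, (X a b + Δ a b) * β b = r a - ∑ b, Δ a b * β b := fun a Δ => by
    simp only [r, add_mul, Finset.sum_add_distrib]
    ring
  have hL2 : ∀ a, MemLp (fun x : κ → ℝ => r a - ∑ b, x b * β b) 2 (Measure.pi fun _ => μ) :=
    fun a => (memLp_const (r a)).sub (memLp_sum_mul_pi hμ β)
  have hint : ∀ a, Integrable (fun Δ : ι → κ → ℝ => (r a - ∑ b, Δ a b * β b) ^ 2)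
      (Measure.pi fun _ : ι => Measure.pi fun _ : κ => μ) := fun a =>
    integrable_comp_eval (X := fun _ => κ → ℝ) (f := fun x => (r a - ∑ b, x b * β b) ^ 2)
      (hL2 a).integrable_sq
  have hterm : ∀ a, ∫ Δ, (r a - ∑ b, Δ a b * β b) ^ 2
      ∂Measure.pi (fun _ : ι => Measure.pi fun _ : κ => μ) =
        r a ^ 2 + Var[id; μ] * ∑ b, β b ^ 2 := fun a => by
    rw [integral_comp_eval (μ := fun _ : ι => Measure.pi fun _ : κ => μ) (i := a)
      (f := fun x => (r a - ∑ b, x b * β b) ^ 2) (hL2 a).integrable_sq.aestronglyMeasurable,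
      integral_sub_sum_mul_sq_pi hμ h0]
  simp_rw [hrow]
  rw [integral_finsetSum _ fun a _ => hint a]
  simp_rw [hterm]
  rw [Finset.sum_add_distrib, Finset.sum_const, Finset.card_univ, nsmul_eq_mul, mul_assoc]

end LinearNoise

section Box

variable {ι κ : Type*} [Fintype ι] [Fintype κ] {ρ : ℝ}

theorem volume_restrict_abs_le_eq_smul_pi (hρ : 0 < ρ) :
    volume.restrict {Δ : ι → κ → ℝ | ∀ a b, |Δ a b| ≤ ρ} =
      ((2 * ρ).toNNReal ^ Fintype.card κ) ^ Fintype.card ι •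
        Measure.pi (fun _ : ι => Measure.pi fun _ : κ => volume[|Icc (-ρ) ρ]) := by
  have hbox : {Δ : ι → κ → ℝ | ∀ a b, |Δ a b| ≤ ρ} =
      univ.pi fun _ => univ.pi fun _ => Icc (-ρ) ρ := by
    ext Δ
    simp only [mem_ofPred_eq, mem_univ_pi, mem_Icc, abs_le]
  have hI : volume.restrict (Icc (-ρ) ρ) = (2 * ρ).toNNReal • volume[|Icc (-ρ) ρ] := by
    rw [volume.restrict_eq_smul_cond (by simp [hρ]) (by simp), Real.volume_Icc,
      sub_neg_eq_add, ← two_mul]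
    rfl -- `ENNReal.ofReal x` is `↑x.toNNReal` by definition
  rw [hbox, volume_pi, Measure.restrict_pi_pi]
  simp_rw [volume_pi, Measure.restrict_pi_pi, hI, Measure.pi_nnreal_smul]

theorem setIntegral_abs_le_sum_sq_residual (hρ : 0 < ρ) (X : ι → κ → ℝ) (y : ι → ℝ)
    (β : κ → ℝ) :
    ∫ Δ in {Δ : ι → κ → ℝ | ∀ a b, |Δ a b| ≤ ρ}, ∑ a, (y a - ∑ b, (X a b + Δ a b) * β b) ^ 2 =
      (2 * ρ) ^ (Fintype.card ι * Fintype.card κ) *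
        (∑ a, (y a - ∑ b, X a b * β b) ^ 2 + (Fintype.card ι * ρ ^ 2 / 3) * ∑ b, β b ^ 2) := by
  have hab : -ρ < ρ := by linarith
  have := isProbabilityMeasure_cond_Icc hab
  rw [volume_restrict_abs_le_eq_smul_pi hρ, integral_smul_nnreal_measure,
    integral_sum_sq_residual_pi (memLp_id_cond_Icc hab) (by rw [integral_id_cond_Icc hab]; ring),
    variance_id_cond_Icc hab, NNReal.smul_def, smul_eq_mul, NNReal.coe_pow, NNReal.coe_pow,
    Real.coe_toNNReal _ (by positivity), ← pow_mul, mul_comm (Fintype.card κ)]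
  ring

end Box

theorem averaged_robust_box_general (n k : ℕ)
    (ρ : ℝ) (hρ : 0 < ρ) (X : Fin n → Fin k → ℝ) (y : Fin n → ℝ)
    (U : Set (Fin n → Fin k → ℝ))
    (hU : U = {Δ | ∀ a b, |Δ a b| ≤ ρ}) :
    (∀ β : Fin k → ℝ,
      ∫ Δ in U, (∑ a, (y a - ∑ b, (X a b + Δ a b) * β b) ^ 2) =
        (2 * ρ) ^ (n * k) *
          ((∑ a, (y a - ∑ b, X a b * β b) ^ 2) + (n * ρ ^ 2 / 3) * ∑ b, (β b) ^ 2)) ∧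
    (∀ β : Fin k → ℝ,
      (∀ β' : Fin k → ℝ,
        (∫ Δ in U, (∑ a, (y a - ∑ b, (X a b + Δ a b) * β b) ^ 2)) ≤
          ∫ Δ in U, (∑ a, (y a - ∑ b, (X a b + Δ a b) * β' b) ^ 2)) ↔
      (∀ β' : Fin k → ℝ,
        (∑ a, (y a - ∑ b, X a b * β b) ^ 2) + (n * ρ ^ 2 / 3) * ∑ b, (β b) ^ 2 ≤
          (∑ a, (y a - ∑ b, X a b * β' b) ^ 2) + (n * ρ ^ 2 / 3) * ∑ b, (β' b) ^ 2)) := by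
  subst hU
  have havg (β : Fin k → ℝ) := setIntegral_abs_le_sum_sq_residual hρ X y β
  simp only [Fintype.card_fin] at havg
  refine ⟨havg, fun β => forall_congr' fun β' => ?_⟩
  rw [havg β, havg β']
  exact mul_le_mul_iff_right₀ (by positivity)

theorem averaged_robust_box (n k : ℕ) (hn : 1 ≤ n) (hk : 1 ≤ k)
    (ρ : ℝ) (hρ : 0 < ρ) (X : Fin n → Fin k → ℝ) (y : Fin n → ℝ)
    (U : Set (Fin n → Fin k → ℝ))
    (hU : U = {Δ | ∀ a b, |Δ a b| ≤ ρ}) :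
    (∀ β : Fin k → ℝ,
      ∫ Δ in U, (∑ a, (y a - ∑ b, (X a b + Δ a b) * β b) ^ 2) =
        (2 * ρ) ^ (n * k) *
          ((∑ a, (y a - ∑ b, X a b * β b) ^ 2) + (n * ρ ^ 2 / 3) * ∑ b, (β b) ^ 2)) ∧
    (∀ β : Fin k → ℝ,
      (∀ β' : Fin k → ℝ,
        (∫ Δ in U, (∑ a, (y a - ∑ b, (X a b + Δ a b) * β b) ^ 2)) ≤
          ∫ Δ in U, (∑ a, (y a - ∑ b, (X a b + Δ a b) * β' b) ^ 2)) ↔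
      (∀ β' : Fin k → ℝ,
        (∑ a, (y a - ∑ b, X a b * β b) ^ 2) + (n * ρ ^ 2 / 3) * ∑ b, (β b) ^ 2 ≤
          (∑ a, (y a - ∑ b, X a b * β' b) ^ 2) + (n * ρ ^ 2 / 3) * ∑ b, (β' b) ^ 2)) :=
  averaged_robust_box_general n k ρ hρ X y U hU
end

section
/- Let ρ > 0 and n ≥ 1. The second moment of a single coordinate with respect to the uniform measure on the ℓ1-ball {x ∈ ℝ^n : ‖x‖_1 ≤ ρ} equals 2ρ^2/((n+1)(n+2)). -/
open MeasureTheory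
open scoped ENNReal

lemma int_pow_sub (m : ℕ) (r : ℝ) :
    ∫ t in (0:ℝ)..r, (r - t)^m = r^(m+1)/(m+1) := by
  have := intervalIntegral.integral_comp_sub_left (a := (0:ℝ)) (b := r) (fun u => u^m) r
  simp only [sub_self, sub_zero] at this
  rw [this, integral_pow]
  simp

lemma even_reduce (f : ℝ → ℝ) (hf : Continuous f) (r : ℝ) (hr : 0 ≤ r) :
    ∫ t in (-r)..r, f |t| = 2 * ∫ t in (0:ℝ)..r, f t := by
  have h1 : ∫ t in (-r)..(0:ℝ), f |t| = ∫ t in (0:ℝ)..r, f t := by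
    have e1 : ∫ t in (-r)..(0:ℝ), f |t| = ∫ t in (-r)..(0:ℝ), f (-t) :=
      intervalIntegral.integral_congr (fun t ht => by
        rw [Set.uIcc_of_le (by linarith : -r ≤ (0:ℝ))] at ht
        rw [abs_of_nonpos ht.2])
    rw [e1, intervalIntegral.integral_comp_neg f]
    norm_num
  have h2 : ∫ t in (0:ℝ)..r, f |t| = ∫ t in (0:ℝ)..r, f t :=
    intervalIntegral.integral_congr (fun t ht => by
      rw [Set.uIcc_of_le hr] at ht
      rw [abs_of_nonneg ht.1])
  have hcont : Continuous fun t : ℝ => f |t| := hf.comp continuous_abs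
  rw [← intervalIntegral.integral_add_adjacent_intervals
      (f := fun t => f |t|) (a := -r) (b := (0:ℝ)) (c := r)
      (hcont.intervalIntegrable _ _) (hcont.intervalIntegrable _ _), h1, h2]
  ring

lemma int2' (m : ℕ) (r : ℝ) :
    ∫ t in (0:ℝ)..r, t^2 * (r - t)^m = 2 * r^(m+3)/((m+1)*(m+2)*(m+3)) := by
  have h0 : ∫ t in (0:ℝ)..r, t^2 * (r - t)^m
      = ∫ t in (0:ℝ)..r, (fun u => u^2 * (r - u)^m) (r - t) := by
    have := intervalIntegral.integral_comp_sub_left (a := (0:ℝ)) (b := r)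
      (fun u => u^2 * (r - u)^m) r
    simp only [sub_self, sub_zero] at this
    rw [this]
  have h1 : ∫ t in (0:ℝ)..r, (fun u => u^2 * (r - u)^m) (r - t)
      = ∫ t in (0:ℝ)..r, (r^2 * t^m - 2*r * t^(m+1) + t^(m+2)) := by
    apply intervalIntegral.integral_congr
    intro t _
    simp only
    ring
  rw [h0, h1]
  have i1 : IntervalIntegrable (fun t : ℝ => r^2 * t^m) volume 0 r :=
    ((continuous_const.mul (continuous_pow m))).intervalIntegrable _ _
  have i2 : IntervalIntegrable (fun t : ℝ => 2*r * t^(m+1)) volume 0 r :=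
    ((continuous_const.mul (continuous_pow (m+1)))).intervalIntegrable _ _
  have i3 : IntervalIntegrable (fun t : ℝ => t^(m+2)) volume 0 r :=
    (continuous_pow (m+2)).intervalIntegrable _ _
  rw [intervalIntegral.integral_add (i1.sub i2) i3, intervalIntegral.integral_sub i1 i2,
    intervalIntegral.integral_const_mul, intervalIntegral.integral_const_mul,
    integral_pow, integral_pow, integral_pow]
  have c1 : (m:ℝ) + 1 ≠ 0 := by positivity
  have c2 : (m:ℝ) + 2 ≠ 0 := by positivity
  have c3 : (m:ℝ) + 3 ≠ 0 := by positivity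
  push_cast
  field_simp
  ring

lemma slice_l1 (m : ℕ) (i : Fin (m+1)) (f : ℝ → ℝ≥0∞) (hf : Measurable f) (ρ : ℝ) :
    ∫⁻ x : Fin (m+1) → ℝ in {x | ∑ k, |x k| ≤ ρ}, f (x i) =
      ∫⁻ t : ℝ, f t * volume {y : Fin m → ℝ | ∑ k, |y k| ≤ ρ - |t|} := by
  have hsum : Measurable (fun x : Fin (m+1) → ℝ => ∑ k, |x k|) := by
    apply Finset.measurable_sum
    intro k _
    exact (measurable_pi_apply k).abs
  have hS : MeasurableSet {x : Fin (m+1) → ℝ | ∑ k, |x k| ≤ ρ} :=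
    measurableSet_le hsum measurable_const
  set g : (Fin (m+1) → ℝ) → ℝ≥0∞ :=
    {x : Fin (m+1) → ℝ | ∑ k, |x k| ≤ ρ}.indicator (fun x => f (x i)) with hg
  have hgm : Measurable g := (hf.comp (measurable_pi_apply i)).indicator hS
  have step1 : ∫⁻ x : Fin (m+1) → ℝ in {x | ∑ k, |x k| ≤ ρ}, f (x i) = ∫⁻ x, g x := by
    rw [hg, lintegral_indicator hS]
  have hP := measurePreserving_piFinSuccAbove (fun _ : Fin (m+1) => (volume : Measure ℝ)) i
  have step2 : ∫⁻ x, g x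
      = ∫⁻ p : ℝ × (Fin m → ℝ),
          g ((MeasurableEquiv.piFinSuccAbove (fun _ => ℝ) i).symm p)
          ∂((volume : Measure ℝ).prod (Measure.pi fun _ => (volume : Measure ℝ))) := by
    rw [volume_pi, ← (MeasurePreserving.symm _ hP).lintegral_comp hgm]
  have key : ∀ (t : ℝ) (y : Fin m → ℝ),
      g (i.insertNth t y)
        = Set.indicator {y : Fin m → ℝ | ∑ k, |y k| ≤ ρ - |t|} (fun _ => f t) y := by
    intro t y
    have hsum2 : ∑ k, |(i.insertNth t y) k| = |t| + ∑ j, |y j| := by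
      rw [Fin.sum_univ_succAbove (fun k => |(i.insertNth t y) k|) i]
      simp
    by_cases h : ∑ j, |y j| ≤ ρ - |t|
    · rw [hg, Set.indicator_of_mem (show i.insertNth t y ∈ {x | ∑ k, |x k| ≤ ρ} by
        simp only [Set.mem_setOf_eq, hsum2]; linarith), Set.indicator_of_mem
        (show y ∈ {y : Fin m → ℝ | ∑ k, |y k| ≤ ρ - |t|} from h), Fin.insertNth_apply_same]
    · rw [hg, Set.indicator_of_notMem (show i.insertNth t y ∉ {x | ∑ k, |x k| ≤ ρ} by
        simp only [Set.mem_setOf_eq, hsum2]; push_neg at h ⊢; linarith),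
        Set.indicator_of_notMem (show y ∉ {y : Fin m → ℝ | ∑ k, |y k| ≤ ρ - |t|} from h)]
  rw [step1, step2]
  rw [lintegral_prod (fun p => g ((MeasurableEquiv.piFinSuccAbove (fun _ => ℝ) i).symm p))
    ((hgm.comp (MeasurableEquiv.piFinSuccAbove (fun _ => ℝ) i).symm.measurable).aemeasurable)]
  have hA : ∀ t : ℝ, MeasurableSet {y : Fin m → ℝ | ∑ k, |y k| ≤ ρ - |t|} := by
    intro t
    exact measurableSet_le (by
      apply Finset.measurable_sum
      intro k _
      exact (measurable_pi_apply k).abs) measurable_const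
  have : ∀ t : ℝ, ∫⁻ y, g ((MeasurableEquiv.piFinSuccAbove (fun _ => ℝ) i).symm (t, y))
        ∂(Measure.pi fun _ => (volume : Measure ℝ))
      = f t * volume {y : Fin m → ℝ | ∑ k, |y k| ≤ ρ - |t|} := by
    intro t
    have e : ∀ y : Fin m → ℝ,
        g ((MeasurableEquiv.piFinSuccAbove (fun _ => ℝ) i).symm (t, y)) = Set.indicator {y : Fin m → ℝ | ∑ k, |y k| ≤ ρ - |t|} (fun _ => f t) y := by
      intro y
      rw [MeasurableEquiv.piFinSuccAbove_symm_apply]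
      exact key t y
    simp_rw [e]
    rw [lintegral_indicator_const (hA t)]
    rw [← volume_pi]
  simp_rw [this]

lemma l1_ball_empty (m : ℕ) (r : ℝ) (hr : r < 0) :
    {y : Fin m → ℝ | ∑ k, |y k| ≤ r} = ∅ := by
  apply Set.eq_empty_of_forall_notMem
  intro y hy
  have h0 : (0:ℝ) ≤ ∑ k, |y k| := Finset.sum_nonneg fun k _ => abs_nonneg _
  exact absurd (le_trans h0 hy) (not_le.mpr hr)

lemma l1_ball_volume (m : ℕ) : ∀ r : ℝ, 0 ≤ r →
    volume {y : Fin m → ℝ | ∑ k, |y k| ≤ r}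
      = ENNReal.ofReal ((2*r)^m / m.factorial) := by
  induction m with
  | zero =>
    intro r hr
    have h : {y : Fin 0 → ℝ | ∑ k, |y k| ≤ r} = Set.univ := by
      ext y; simp [hr]
    rw [h, volume_pi, Measure.pi_univ]
    simp
  | succ m ih =>
    intro r hr
    have h1 : volume {y : Fin (m+1) → ℝ | ∑ k, |y k| ≤ r}
        = ∫⁻ x : Fin (m+1) → ℝ in {y | ∑ k, |y k| ≤ r}, (fun _ : ℝ => (1:ℝ≥0∞)) (x 0) :=
      (setLIntegral_one _).symm
    rw [h1, slice_l1 m 0 (fun _ => 1) measurable_const r]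
    have h2 : ∀ t : ℝ, (1:ℝ≥0∞) * volume {y : Fin m → ℝ | ∑ k, |y k| ≤ r - |t|}
        = Set.indicator (Set.Icc (-r) r)
            (fun t => ENNReal.ofReal ((2*(r - |t|))^m / m.factorial)) t := by
      intro t
      rw [one_mul]
      by_cases h : |t| ≤ r
      · rw [ih (r - |t|) (by linarith), Set.indicator_of_mem (abs_le.mp h |> fun hh =>
          Set.mem_Icc.mpr hh)]
      · rw [l1_ball_empty m _ (by linarith [abs_nonneg t] : r - |t| < 0), measure_empty,
          Set.indicator_of_notMem (by
            intro hc
            exact h (abs_le.mpr (Set.mem_Icc.mp hc)))]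
    simp_rw [h2]
    rw [lintegral_indicator measurableSet_Icc]
    have hcont : Continuous fun t : ℝ => (2*(r - |t|))^m / (m.factorial : ℝ) := by
      fun_prop
    have hint : IntegrableOn (fun t : ℝ => (2*(r - |t|))^m / (m.factorial : ℝ))
        (Set.Icc (-r) r) volume := hcont.integrableOn_Icc
    rw [← ofReal_integral_eq_lintegral_ofReal hint
      ((ae_restrict_iff' measurableSet_Icc).mpr (Filter.Eventually.of_forall fun t ht => by
        obtain ⟨h1, h2⟩ := Set.mem_Icc.mp ht
        have : (0:ℝ) ≤ r - |t| := by
          rcases abs_cases t with ⟨he, _⟩ | ⟨he, _⟩ <;> rw [he] <;> linarith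
        have h2r : (0:ℝ) ≤ 2 * (r - |t|) := by linarith
        positivity))]
    congr 1
    rw [MeasureTheory.integral_Icc_eq_integral_Ioc,
      ← intervalIntegral.integral_of_le (by linarith : -r ≤ r)]
    have h3 : ∀ t : ℝ, (2*(r - |t|))^m / (m.factorial : ℝ)
        = (2^m / (m.factorial : ℝ)) * (fun u => (r - u)^m) |t| := by
      intro t
      simp only
      rw [mul_pow]
      ring
    simp_rw [h3]
    rw [intervalIntegral.integral_const_mul,
      even_reduce (fun u => (r - u)^m) (by fun_prop) r hr, int_pow_sub]
    rw [Nat.factorial_succ]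
    have c1 : (m:ℝ) + 1 ≠ 0 := by positivity
    have c2 : (m.factorial : ℝ) ≠ 0 := Nat.cast_ne_zero.mpr m.factorial_ne_zero
    push_cast
    field_simp
    ring

theorem l1_ball_uniform_second_moment (n : ℕ) (hn : 1 ≤ n) (ρ : ℝ) (hρ : 0 < ρ)
    (i : Fin n) :
    (∫ x in {x : Fin n → ℝ | ∑ k, |x k| ≤ ρ}, (x i) ^ 2) / ((2 * ρ) ^ n / n.factorial) =
      2 * ρ ^ 2 / ((n + 1) * (n + 2)) := by
  obtain ⟨m, rfl⟩ : ∃ m, n = m + 1 := ⟨n - 1, (Nat.succ_pred_eq_of_pos hn).symm⟩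
  have hf : Measurable fun t : ℝ => ENNReal.ofReal (t ^ 2) :=
    (measurable_id.pow_const 2).ennreal_ofReal
  have hB : ∫ x in {x : Fin (m+1) → ℝ | ∑ k, |x k| ≤ ρ}, (x i) ^ 2
      = (∫⁻ x : Fin (m+1) → ℝ in {x | ∑ k, |x k| ≤ ρ},
          (fun t : ℝ => ENNReal.ofReal (t ^ 2)) (x i)).toReal :=
    integral_eq_lintegral_of_nonneg_ae (Filter.Eventually.of_forall fun x => sq_nonneg _)
      ((measurable_pi_apply i).pow_const 2).aestronglyMeasurable
  rw [hB, slice_l1 m i (fun t : ℝ => ENNReal.ofReal (t ^ 2)) hf ρ]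
  have h2 : ∀ t : ℝ, (fun t : ℝ => ENNReal.ofReal (t ^ 2)) t
        * volume {y : Fin m → ℝ | ∑ k, |y k| ≤ ρ - |t|}
      = Set.indicator (Set.Icc (-ρ) ρ)
          (fun t => ENNReal.ofReal (t ^ 2 * ((2*(ρ - |t|))^m / m.factorial))) t := by
    intro t
    simp only
    by_cases h : |t| ≤ ρ
    · rw [l1_ball_volume m (ρ - |t|) (by linarith),
        ← ENNReal.ofReal_mul (sq_nonneg t),
        Set.indicator_of_mem (Set.mem_Icc.mpr (abs_le.mp h))]
    · rw [l1_ball_empty m _ (by linarith [abs_nonneg t] : ρ - |t| < 0), measure_empty,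
        mul_zero, Set.indicator_of_notMem (by
          intro hc
          exact h (abs_le.mpr (Set.mem_Icc.mp hc)))]
  simp_rw [h2]
  rw [lintegral_indicator measurableSet_Icc]
  have hcont : Continuous fun t : ℝ => t ^ 2 * ((2*(ρ - |t|))^m / (m.factorial : ℝ)) := by
    fun_prop
  rw [← ofReal_integral_eq_lintegral_ofReal hcont.integrableOn_Icc
    ((ae_restrict_iff' measurableSet_Icc).mpr (Filter.Eventually.of_forall fun t ht => by
      obtain ⟨ha, hb⟩ := Set.mem_Icc.mp ht
      have h0 : (0:ℝ) ≤ ρ - |t| := by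
        rcases abs_cases t with ⟨he, _⟩ | ⟨he, _⟩ <;> rw [he] <;> linarith
      have h2r : (0:ℝ) ≤ 2 * (ρ - |t|) := by linarith
      positivity))]
  rw [MeasureTheory.integral_Icc_eq_integral_Ioc,
    ← intervalIntegral.integral_of_le (by linarith : -ρ ≤ ρ)]
  have h3 : ∀ t : ℝ, t ^ 2 * ((2*(ρ - |t|))^m / (m.factorial : ℝ))
      = (2^m / (m.factorial : ℝ)) * (fun u => u^2 * (ρ - u)^m) |t| := by
    intro t
    simp only
    rw [mul_pow, ← sq_abs t]
    ring
  simp_rw [h3]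
  rw [intervalIntegral.integral_const_mul,
    even_reduce (fun u => u^2 * (ρ - u)^m) (by fun_prop) ρ hρ.le, int2']
  have c0 : (0:ℝ) < ρ := hρ
  have cm : (0:ℝ) < (m.factorial : ℝ) := by positivity
  rw [ENNReal.toReal_ofReal (by positivity)]
  have c1 : (m:ℝ) + 1 ≠ 0 := by positivity
  have c2 : (m:ℝ) + 2 ≠ 0 := by positivity
  have c3 : (m:ℝ) + 3 ≠ 0 := by positivity
  have c4 : (m.factorial : ℝ) ≠ 0 := ne_of_gt cm
  have c5 : ρ ≠ 0 := ne_of_gt hρ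
  rw [Nat.factorial_succ]
  push_cast
  field_simp
  ring
end
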